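/- (i) For every T-invariant Borel probability measure μ on X, h_ν(μ) ≤ 0. (ii) If moreover μ satisfies the duality ∫ 𝓛_0(φ) dμ = ∫ φ dμ for every continuous φ : X → [−∞, ∞) for which both sides are defined, then h_ν(μ) = 0, i.e. μ is a measure of maximal entropy. -/

import Mathlib

open MeasureTheory Real Filter

/-- The Ruelle operator `(𝓛_A φ)(x) = ∫_{Ker T} e^{A(z + v_x)} φ(z + v_x) dν(z)`,
where `ν` is the a priori probability measure (supported on `Ker T`) and `v x` is the
unique element of `E` with `T (v x) = x`. -/
noncomputable def ruelle {X : Type*} [NormedAddCommGroup X] [NormedSpace ℝ X]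
    [MeasurableSpace X] (ν : Measure X) (v : X → X) (A φ : X → ℝ) (x : X) : ℝ :=
  ∫ z, Real.exp (A (z + v x)) * φ (z + v x) ∂ν

/-- The entropy `h_ν(μ) = inf { ∫ log (𝓛_0 u / u) dμ : u bounded continuous, u > 0 }`. -/
noncomputable def entropy {X : Type*} [NormedAddCommGroup X] [NormedSpace ℝ X]
    [MeasurableSpace X] (ν : Measure X) (v : X → X) (μ : Measure X) : ℝ :=
  sInf { r : ℝ | ∃ u : X → ℝ, Continuous u ∧ (∃ C : ℝ, ∀ x, |u x| ≤ C) ∧ (∀ x, 0 < u x) ∧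
    r = ∫ x, Real.log (ruelle ν v (fun _ => (0 : ℝ)) u x / u x) ∂μ }

/-!
Part (i) is witnessed by `u ≡ 1`, for which `𝓛₀ u = u`. For (ii), let `w` be continuous with
values in `[ε, C]`, `ε > 0`, and put `ψ = w / (𝓛₀ w ∘ T)`. Since `T (z + v x) = x` for `ν`-a.e. `z`,
`𝓛₀ ψ = 1`, so duality gives `∫ ψ dμ = 1`. Integrating `log ψ ≤ ψ - 1` and using the
`T`-invariance of `μ` yields `∫ log (𝓛₀ w / w) dμ ≥ 0`. A general bounded `u > 0` is reached
through `w = u + ε`: as `𝓛₀ (u + ε) = 𝓛₀ u + ε`, dominated convergence as `ε → 0` applies, the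
integrands being bounded by `|log (𝓛₀ u / u)|`. The function `ψ` is continuous because `v` is,
by the open mapping theorem for `T : E₁ → X`.
-/

open Set Topology

theorem ContinuousLinearMap.continuous_of_rightInverse_mem_of_disjoint_ker
    {𝕜 E F : Type*} [NontriviallyNormedField 𝕜]
    [NormedAddCommGroup E] [NormedSpace 𝕜 E] [CompleteSpace E]
    [NormedAddCommGroup F] [NormedSpace 𝕜 F] [CompleteSpace F]
    (T : E →L[𝕜] F) {S : Submodule 𝕜 E} (hS : IsClosed (S : Set E))
    (hdisj : Disjoint (LinearMap.ker (T : E →ₗ[𝕜] F)) S) {v : F → E}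
    (hv : ∀ y, v y ∈ S ∧ T (v y) = y) : Continuous v := by
  have : CompleteSpace S := hS.completeSpace_coe
  let TS : S →L[𝕜] F := T.comp S.subtypeL
  have hinj : LinearMap.ker (TS : S →ₗ[𝕜] F) = ⊥ :=
    LinearMap.ker_eq_bot'.mpr fun e he => Subtype.ext (Submodule.disjoint_def.mp hdisj _ he e.2)
  have hsurj : LinearMap.range (TS : S →ₗ[𝕜] F) = ⊤ :=
    LinearMap.range_eq_top.mpr fun y => ⟨⟨v y, (hv y).1⟩, (hv y).2⟩
  let e := ContinuousLinearEquiv.ofBijective TS hinj hsurj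
  have hve : v = fun y => (e.symm y : E) := funext fun y =>
    congrArg Subtype.val (e.eq_symm_apply.mpr (hv y).2 : (⟨v y, (hv y).1⟩ : S) = e.symm y)
  rw [hve]
  exact continuous_subtype_val.comp e.symm.continuous

theorem Real.abs_log_add_div_add_le {a b ε : ℝ} (ha : 0 < a) (hb : 0 < b) (hε : 0 ≤ ε) :
    |log ((a + ε) / (b + ε))| ≤ |log (a / b)| := by
  wlog hab : a ≤ b generalizing a b
  · have h := this hb ha (le_of_not_ge hab)
    rwa [← inv_div, log_inv, abs_neg, ← inv_div a b, log_inv, abs_neg] at h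
  have h1 : a / b ≤ (a + ε) / (b + ε) := by
    rw [div_le_div_iff₀ hb (by linarith)]
    nlinarith
  have h2 : (a + ε) / (b + ε) ≤ 1 := (div_le_one (by linarith)).mpr (by linarith)
  have h3 := log_le_log (div_pos ha hb) h1
  have h4 := log_nonpos (by positivity) h2
  rw [abs_of_nonpos h4, abs_of_nonpos (h3.trans h4)]
  linarith

theorem integrable_log_of_mem_Icc {α : Type*} [MeasurableSpace α] {μ : Measure α}
    [IsFiniteMeasure μ] {f : α → ℝ} (hf : AEMeasurable f μ) {a b : ℝ} (ha : 0 < a)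
    (h : ∀ x, f x ∈ Icc a b) : Integrable (fun x => log (f x)) μ :=
  Integrable.of_bound hf.log.aestronglyMeasurable (max |log a| |log b|) <| ae_of_all _ fun x =>
    abs_le_max_abs_abs (log_le_log ha (h x).1) (log_le_log (ha.trans_le (h x).1) (h x).2)

theorem integral_log_div_nonneg_of_forall_add {α : Type*} [MeasurableSpace α] {μ : Measure α}
    {f g : α → ℝ} (hf : AEMeasurable f μ) (hg : AEMeasurable g μ)
    (hf0 : ∀ x, 0 < f x) (hg0 : ∀ x, 0 < g x)
    (h : ∀ ε > 0, 0 ≤ ∫ x, log ((f x + ε) / (g x + ε)) ∂μ) :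
    0 ≤ ∫ x, log (f x / g x) ∂μ := by
  by_cases hint : Integrable (fun x => log (f x / g x)) μ
  swap
  · rw [integral_undef hint]
  have hlim : Tendsto (fun ε => ∫ x, log ((f x + ε) / (g x + ε)) ∂μ) (𝓝[>] 0)
      (𝓝 (∫ x, log (f x / g x) ∂μ)) := by
    refine tendsto_integral_filter_of_dominated_convergence _
      (Eventually.of_forall fun ε =>
        ((hf.add_const ε).div (hg.add_const ε)).log.aestronglyMeasurable)
      ?_ hint.abs (ae_of_all _ fun x => ?_)
    · filter_upwards [self_mem_nhdsWithin] with ε hε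
      exact ae_of_all _ fun x => abs_log_add_div_add_le (hf0 x) (hg0 x) (le_of_lt hε)
    · have hdiv : Tendsto (fun ε : ℝ => (f x + ε) / (g x + ε)) (𝓝 0)
          (𝓝 ((f x + 0) / (g x + 0))) :=
        (tendsto_const_nhds.add tendsto_id).div (tendsto_const_nhds.add tendsto_id)
          (by simpa using (hg0 x).ne')
      rw [add_zero, add_zero] at hdiv
      exact (hdiv.log (div_pos (hf0 x) (hg0 x)).ne').mono_left nhdsWithin_le_nhds
  exact ge_of_tendsto hlim (eventually_nhdsWithin_of_forall h)

theorem integrable_comp_add_const {X : Type*} [TopologicalSpace X] [Add X] [ContinuousAdd X]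
    [MeasurableSpace X] [OpensMeasurableSpace X] {ν : Measure X} [IsFiniteMeasure ν]
    {φ : X → ℝ} (hφ : Continuous φ) {C : ℝ} (hC : ∀ y, |φ y| ≤ C) (a : X) :
    Integrable (fun z => φ (z + a)) ν :=
  Integrable.of_bound (hφ.comp (continuous_add_const a)).aestronglyMeasurable C
    (ae_of_all _ fun _ => hC _)

section Ruelle

variable {X : Type*} [NormedAddCommGroup X] [NormedSpace ℝ X] [MeasurableSpace X]
  {ν : Measure X} {v : X → X}

theorem ruelle_zero_apply (φ : X → ℝ) (x : X) :
    ruelle ν v (fun _ => 0) φ x = ∫ z, φ (z + v x) ∂ν := by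
  simp [ruelle]

theorem ruelle_zero_comp_mul {T : X →L[ℝ] X}
    (hν : ν ((LinearMap.ker (T : X →ₗ[ℝ] X) : Set X)ᶜ) = 0) {x : X} (hTv : T (v x) = x)
    (g φ : X → ℝ) :
    ruelle ν v (fun _ => 0) (fun y => g (T y) * φ y) x = g x * ruelle ν v (fun _ => 0) φ x := by
  have hT : ∀ᵐ z ∂ν, T (z + v x) = x := by
    filter_upwards [ae_iff.mpr hν] with z hz
    rw [map_add, hTv, show T z = 0 from hz, zero_add]
  simp only [ruelle_zero_apply]
  rw [integral_congr_ae (hT.mono fun z hz => by rw [hz]), integral_const_mul]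

theorem entropy_nonpos [IsProbabilityMeasure ν] (μ : Measure X) : entropy ν v μ ≤ 0 :=
  Real.sInf_nonpos' ⟨0, ⟨fun _ => 1, continuous_const, ⟨1, by simp⟩, fun _ => one_pos,
    by simp [ruelle]⟩, le_rfl⟩

theorem le_entropy [IsProbabilityMeasure ν] {μ : Measure X} {c : ℝ}
    (h : ∀ u : X → ℝ, Continuous u → (∃ C : ℝ, ∀ x, |u x| ≤ C) → (∀ x, 0 < u x) →
      c ≤ ∫ x, log (ruelle ν v (fun _ => 0) u x / u x) ∂μ) :
    c ≤ entropy ν v μ :=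
  le_csInf ⟨0, ⟨fun _ => 1, continuous_const, ⟨1, by simp⟩, fun _ => one_pos,
    by simp [ruelle]⟩⟩ fun _ ⟨u, hu, hC, hu0, hr⟩ => hr ▸ h u hu hC hu0

variable [BorelSpace X]

theorem continuous_ruelle_zero [IsFiniteMeasure ν] (hv : Continuous v) {φ : X → ℝ}
    (hφ : Continuous φ) {C : ℝ} (hC : ∀ y, |φ y| ≤ C) :
    Continuous (ruelle ν v (fun _ => 0) φ) := by
  rw [show ruelle ν v (fun _ => 0) φ = fun x => ∫ z, φ (z + v x) ∂ν from
    funext (ruelle_zero_apply φ)]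
  exact continuous_of_dominated
    (fun x => (hφ.comp (continuous_add_const (v x))).aestronglyMeasurable)
    (fun _ => ae_of_all _ fun _ => hC _) (integrable_const C)
    (ae_of_all _ fun _ => hφ.comp (continuous_const.add hv))

theorem ruelle_zero_pos [IsFiniteMeasure ν] [NeZero ν] {φ : X → ℝ} (hφ : Continuous φ)
    {C : ℝ} (hC : ∀ y, |φ y| ≤ C) (hφ0 : ∀ y, 0 < φ y) (x : X) :
    0 < ruelle ν v (fun _ => 0) φ x := by
  rw [ruelle_zero_apply, integral_pos_iff_support_of_nonneg (fun _ => (hφ0 _).le)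
    (integrable_comp_add_const hφ hC (v x))]
  have hsupp : Function.support (fun z => φ (z + v x)) = univ :=
    eq_univ_of_forall fun _ => (hφ0 _).ne'
  rw [hsupp]
  exact Measure.measure_univ_pos.mpr (NeZero.ne ν)

theorem ruelle_zero_mem_Icc [IsProbabilityMeasure ν] {φ : X → ℝ} (hφ : Continuous φ)
    {a b : ℝ} (h : ∀ y, φ y ∈ Icc a b) (x : X) :
    ruelle ν v (fun _ => 0) φ x ∈ Icc a b := by
  have hint := integrable_comp_add_const (ν := ν) hφ
    (fun y => abs_le_max_abs_abs (h y).1 (h y).2) (v x)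
  rw [ruelle_zero_apply]
  constructor
  · simpa using integral_mono (μ := ν) (integrable_const a) hint fun _ => (h _).1
  · simpa using integral_mono (μ := ν) hint (integrable_const b) fun _ => (h _).2

theorem ruelle_zero_add_const [IsProbabilityMeasure ν] {φ : X → ℝ} (hφ : Continuous φ)
    {C : ℝ} (hC : ∀ y, |φ y| ≤ C) (c : ℝ) :
    ruelle ν v (fun _ => 0) (fun y => φ y + c) = fun x => ruelle ν v (fun _ => 0) φ x + c := by
  funext x
  simp only [ruelle_zero_apply]
  rw [integral_add (integrable_comp_add_const hφ hC (v x)) (integrable_const c)]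
  simp

theorem integral_log_ruelle_div_nonneg_of_mem_Icc [IsProbabilityMeasure ν]
    {μ : Measure X} [IsProbabilityMeasure μ] {T : X →L[ℝ] X}
    (hν : ν ((LinearMap.ker (T : X →ₗ[ℝ] X) : Set X)ᶜ) = 0) (hTv : ∀ x, T (v x) = x)
    (hv : Continuous v) (hinv : μ.map T = μ)
    (hdual : ∀ φ : X → ℝ, Continuous φ → Integrable φ μ →
      Integrable (fun x => ruelle ν v (fun _ => 0) φ x) μ →
      ∫ x, ruelle ν v (fun _ => 0) φ x ∂μ = ∫ x, φ x ∂μ)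
    {w : X → ℝ} (hw : Continuous w) {ε C : ℝ} (hε : 0 < ε) (hwb : ∀ y, w y ∈ Icc ε C) :
    0 ≤ ∫ x, log (ruelle ν v (fun _ => 0) w x / w x) ∂μ := by
  set L := ruelle ν v (fun _ => 0) w
  have hL : ∀ x, L x ∈ Icc ε C := ruelle_zero_mem_Icc hw hwb
  have hLc : Continuous L :=
    continuous_ruelle_zero hv hw fun y => abs_le_max_abs_abs (hwb y).1 (hwb y).2
  have hL0 : ∀ x, 0 < L x := fun x => hε.trans_le (hL x).1
  have hw0 : ∀ y, 0 < w y := fun y => hε.trans_le (hwb y).1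
  set ψ : X → ℝ := fun y => (L (T y))⁻¹ * w y
  have hψ0 : ∀ y, 0 < ψ y := fun y => mul_pos (inv_pos.mpr (hL0 _)) (hw0 y)
  have hψc : Continuous ψ := ((hLc.comp T.continuous).inv₀ fun y => (hL0 _).ne').mul hw
  have hψ_int : Integrable ψ μ := by
    refine Integrable.of_bound hψc.aestronglyMeasurable (ε⁻¹ * C) (ae_of_all _ fun y => ?_)
    rw [norm_of_nonneg (hψ0 y).le]
    exact mul_le_mul (inv_anti₀ hε (hL _).1) (hwb y).2 (hw0 y).le (inv_nonneg.mpr hε.le)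
  have hLψ : ruelle ν v (fun _ => 0) ψ = 1 := funext fun x => by
    rw [ruelle_zero_comp_mul hν (hTv x) (fun t => (L t)⁻¹) w]
    exact inv_mul_cancel₀ (hL0 x).ne'
  have hψ1 : ∫ y, ψ y ∂μ = 1 := by
    rw [← hdual ψ hψc hψ_int (by rw [hLψ]; exact integrable_const 1), hLψ]
    simp
  have hlog : ∀ y, 1 - ψ y ≤ log (L (T y)) - log (w y) := fun y => by
    have h := log_le_sub_one_of_pos (hψ0 y)
    rw [log_mul (inv_pos.mpr (hL0 _)).ne' (hw0 y).ne', log_inv] at h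
    linarith
  have hIlogL := integrable_log_of_mem_Icc (μ := μ) hLc.aemeasurable hε hL
  have hIlogLT : Integrable (fun y => log (L (T y))) μ :=
    integrable_log_of_mem_Icc (hLc.comp T.continuous).aemeasurable hε fun y => hL (T y)
  have hIlogw := integrable_log_of_mem_Icc (μ := μ) hw.aemeasurable hε hwb
  have hlogL_inv : ∫ y, log (L (T y)) ∂μ = ∫ x, log (L x) ∂μ := by
    conv_rhs => rw [← hinv]
    exact (integral_map T.continuous.aemeasurable
      (hLc.log fun x => (hL0 x).ne').aestronglyMeasurable).symm
  calc 0 = ∫ y, (1 - ψ y) ∂μ := by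
        rw [integral_sub (integrable_const 1) hψ_int, hψ1]
        simp
    _ ≤ ∫ y, (log (L (T y)) - log (w y)) ∂μ :=
        integral_mono ((integrable_const 1).sub hψ_int) (hIlogLT.sub hIlogw) hlog
    _ = ∫ x, log (L x / w x) ∂μ := by
        rw [integral_sub hIlogLT hIlogw, hlogL_inv, ← integral_sub hIlogL hIlogw]
        exact integral_congr_ae (ae_of_all _ fun x => (log_div (hL0 x).ne' (hw0 x).ne').symm)

theorem integral_log_ruelle_div_nonneg [IsProbabilityMeasure ν]
    {μ : Measure X} [IsProbabilityMeasure μ] {T : X →L[ℝ] X}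
    (hν : ν ((LinearMap.ker (T : X →ₗ[ℝ] X) : Set X)ᶜ) = 0) (hTv : ∀ x, T (v x) = x)
    (hv : Continuous v) (hinv : μ.map T = μ)
    (hdual : ∀ φ : X → ℝ, Continuous φ → Integrable φ μ →
      Integrable (fun x => ruelle ν v (fun _ => 0) φ x) μ →
      ∫ x, ruelle ν v (fun _ => 0) φ x ∂μ = ∫ x, φ x ∂μ)
    {u : X → ℝ} (hu : Continuous u) {C : ℝ} (hC : ∀ y, |u y| ≤ C) (hu0 : ∀ y, 0 < u y) :
    0 ≤ ∫ x, log (ruelle ν v (fun _ => 0) u x / u x) ∂μ := by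
  refine integral_log_div_nonneg_of_forall_add (continuous_ruelle_zero hv hu hC).aemeasurable
    hu.aemeasurable (ruelle_zero_pos hu hC hu0) hu0 fun ε hε => ?_
  have hub : ∀ y, u y + ε ∈ Icc ε (C + ε) := fun y =>
    ⟨by linarith [hu0 y], by linarith [le_abs_self (u y), hC y]⟩
  simpa only [ruelle_zero_add_const hu hC] using
    integral_log_ruelle_div_nonneg_of_mem_Icc hν hTv hv hinv hdual
      (w := fun y => u y + ε) (hu.add continuous_const) hε hub

end Ruelle

theorem stmt5_general {X : Type*} [NormedAddCommGroup X] [NormedSpace ℝ X] [CompleteSpace X]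
    [MeasurableSpace X] [BorelSpace X]
    (T : X →L[ℝ] X)
    (E : ℕ → Submodule ℝ X)
    (hEclosed : ∀ n, 1 ≤ n → IsClosed ((E n : Set X)))
    (hEcompl : ∀ n, 1 ≤ n → IsCompl (LinearMap.ker (((T ^ n : X →L[ℝ] X) : X →ₗ[ℝ] X))) (E n))
    (ν : Measure X) [IsProbabilityMeasure ν] (hνsupp : ν ((LinearMap.ker (T : X →ₗ[ℝ] X) : Set X)ᶜ) = 0)
    (v : X → X) (hv : ∀ x, v x ∈ E 1 ∧ T (v x) = x)
    (μ : Measure X) [IsProbabilityMeasure μ] (hinv : Measure.map T μ = μ) :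
    entropy ν v μ ≤ 0 ∧
      ((∀ φ : X → ℝ, Continuous φ → Integrable φ μ →
          Integrable (fun x => ruelle ν v (fun _ => (0 : ℝ)) φ x) μ →
          ∫ x, ruelle ν v (fun _ => (0 : ℝ)) φ x ∂μ = ∫ x, φ x ∂μ) →
        entropy ν v μ = 0) := by
  refine ⟨entropy_nonpos μ, fun hdual => le_antisymm (entropy_nonpos μ) (le_entropy ?_)⟩
  have hv_cont : Continuous v :=
    T.continuous_of_rightInverse_mem_of_disjoint_ker (hEclosed 1 le_rfl)
      (by simpa using (hEcompl 1 le_rfl).disjoint) hv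
  intro u hu ⟨C, hC⟩ hu0
  exact integral_log_ruelle_div_nonneg hνsupp (fun x => (hv x).2) hv_cont hinv hdual hu hC hu0

/-- (i) every `T`-invariant Borel probability measure `μ` has
`h_ν(μ) ≤ 0`; (ii) if moreover `μ` satisfies the duality `∫ 𝓛_0 φ dμ = ∫ φ dμ` for all
continuous `φ` for which both sides are defined, then `h_ν(μ) = 0`, i.e. `μ` has maximal
entropy. -/
theorem stmt5 {X : Type*} [NormedAddCommGroup X] [NormedSpace ℝ X] [CompleteSpace X]
    [MeasurableSpace X] [BorelSpace X]
    (T : X →L[ℝ] X) (hTsurj : Function.Surjective T) (hTinj : ¬ Function.Injective T)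
    (hfd : FiniteDimensional ℝ (LinearMap.ker (T : X →ₗ[ℝ] X))) (hpos : 0 < Module.finrank ℝ (LinearMap.ker (T : X →ₗ[ℝ] X)))
    (E : ℕ → Submodule ℝ X)
    (hEclosed : ∀ n, 1 ≤ n → IsClosed ((E n : Set X)))
    (hEcompl : ∀ n, 1 ≤ n → IsCompl (LinearMap.ker (((T ^ n : X →L[ℝ] X) : X →ₗ[ℝ] X))) (E n))
    (hEmap : ∀ n, 1 ≤ n → ∀ u ∈ E (n + 1), T u ∈ E n)
    (ν : Measure X) [IsProbabilityMeasure ν] (hνsupp : ν ((LinearMap.ker (T : X →ₗ[ℝ] X) : Set X)ᶜ) = 0)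
    (v : X → X) (hv : ∀ x, v x ∈ E 1 ∧ T (v x) = x)
    (μ : Measure X) [IsProbabilityMeasure μ] (hinv : Measure.map T μ = μ) :
    entropy ν v μ ≤ 0 ∧
      ((∀ φ : X → ℝ, Continuous φ → Integrable φ μ →
          Integrable (fun x => ruelle ν v (fun _ => (0 : ℝ)) φ x) μ →
          ∫ x, ruelle ν v (fun _ => (0 : ℝ)) φ x ∂μ = ∫ x, φ x ∂μ) →
        entropy ν v μ = 0) :=
  stmt5_general T E hEclosed hEcompl ν hνsupp v hv μ hinv
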